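/- There exists a single-bit-memory algorithm, i.e., a function M : ({L,R} × ℝ) × {0,1} → ℝ × {0,1} giving a displacement and a new memory bit as a function of the observation and the current bit only, that solves the exact midpoint localization problem for all lengths and all initial memory contents: for every real D with 1 < D < ∞, the induced dynamics G_D on [-D,D] × {0,1} keeps the position in [-D,D], and for every x₀ ∈ [-D,D] and every initial bit b₀ ∈ {0,1} there exists a finite integer n ≥ 0 such that the position component of G_D^n(x₀, b₀) equals 0. -/
import Mathlib


inductive Side
  | L
  | R

/-- The dynamics on `[-D, D] × {0,1}` induced by the single-bit-memory algorithm `M`: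
at position `x > 0` the walker observes `(R, D - x)`, at `x < 0` it observes
`(L, D + x)`; together with the current bit, `M` gives a displacement and a new bit.
At the midpoint `0` nothing changes. -/
noncomputable def stepB (M : (Side × ℝ) × Bool → ℝ × Bool) (D : ℝ) (p : ℝ × Bool) :
    ℝ × Bool :=
  if 0 < p.1 then
    (p.1 + (M ((Side.R, D - p.1), p.2)).1, (M ((Side.R, D - p.1), p.2)).2)
  else if p.1 < 0 then
    (p.1 + (M ((Side.L, D + p.1), p.2)).1, (M ((Side.L, D + p.1), p.2)).2)
  else p

open Classical in
/-- Our single-bit-memory algorithm. -/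
noncomputable def MG : (Side × ℝ) × Bool → ℝ × Bool := fun q =>
  match q with
  | ((Side.R, d), false) =>
      if ∃ k : ℤ, d = (k : ℝ) then (-1, false) else (d - (⌈d⌉ : ℤ), false)
  | ((Side.R, _), true) => (-(1/2 : ℝ), true)
  | ((Side.L, d), false) =>
      if ∃ k : ℤ, d = (k : ℝ) then ((1/2 : ℝ), false) else (((⌈d⌉ : ℤ) + 1 - d) / 2, true)
  | ((Side.L, d), true) =>
      if ∃ k : ℤ, d = (k : ℝ) then ((1/2 : ℝ), false) else (1, false)

/- step evaluation lemmas -/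

lemma step_Rf_int (D x : ℝ) (hx : 0 < x) (h : ∃ k : ℤ, D - x = (k : ℝ)) :
    stepB MG D (x, false) = (x - 1, false) := by
  have hM : MG ((Side.R, D - x), false) = (-1, false) := by
    simp only [MG]; rw [if_pos h]
  simp only [stepB, hM]
  rw [if_pos (by simpa using hx)]
  simp only [Prod.mk.injEq]
  exact ⟨by ring, trivial⟩

lemma step_Rf_nonint (D x : ℝ) (hx : 0 < x) (h : ¬ ∃ k : ℤ, D - x = (k : ℝ)) :
    stepB MG D (x, false) = (D - (⌈D - x⌉ : ℤ), false) := by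
  have hM : MG ((Side.R, D - x), false) = ((D - x) - (⌈D - x⌉ : ℤ), false) := by
    simp only [MG]; rw [if_neg h]
  simp only [stepB, hM]
  rw [if_pos (by simpa using hx)]
  simp only [Prod.mk.injEq]
  exact ⟨by ring, trivial⟩

lemma step_Rt (D x : ℝ) (hx : 0 < x) :
    stepB MG D (x, true) = (x - 1/2, true) := by
  have hM : MG ((Side.R, D - x), true) = (-(1/2 : ℝ), true) := by
    simp only [MG]
  simp only [stepB, hM]
  rw [if_pos (by simpa using hx)]
  simp only [Prod.mk.injEq]
  exact ⟨by ring, trivial⟩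

lemma step_L_int (D x : ℝ) (b : Bool) (hx : x < 0) (h : ∃ k : ℤ, D + x = (k : ℝ)) :
    stepB MG D (x, b) = (x + 1/2, false) := by
  have hM : MG ((Side.L, D + x), b) = ((1/2 : ℝ), false) := by
    cases b <;> (simp only [MG]; rw [if_pos h])
  simp only [stepB, hM]
  rw [if_neg (by simp; linarith), if_pos (by simpa using hx)]

lemma step_Lf_nonint (D x : ℝ) (hx : x < 0) (h : ¬ ∃ k : ℤ, D + x = (k : ℝ)) :
    stepB MG D (x, false) = (x + ((⌈D + x⌉ : ℤ) + 1 - (D + x)) / 2, true) := by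
  have hM : MG ((Side.L, D + x), false) = (((⌈D + x⌉ : ℤ) + 1 - (D + x)) / 2, true) := by
    simp only [MG]; rw [if_neg h]
  simp only [stepB, hM]
  rw [if_neg (by simp; linarith), if_pos (by simpa using hx)]

lemma step_Lt_nonint (D x : ℝ) (hx : x < 0) (h : ¬ ∃ k : ℤ, D + x = (k : ℝ)) :
    stepB MG D (x, true) = (x + 1, false) := by
  have hM : MG ((Side.L, D + x), true) = ((1 : ℝ), false) := by
    simp only [MG]; rw [if_neg h]
  simp only [stepB, hM]
  rw [if_neg (by simp; linarith), if_pos (by simpa using hx)]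


/-- Reaching the midpoint. -/
def R0 (D : ℝ) (p : ℝ × Bool) : Prop := ∃ n : ℕ, ((stepB MG D)^[n] p).1 = 0

lemma R0_zero {D : ℝ} {p : ℝ × Bool} (h : p.1 = 0) : R0 D p := ⟨0, h⟩

lemma R0_step {D : ℝ} {p : ℝ × Bool} (h : R0 D (stepB MG D p)) : R0 D p := by
  obtain ⟨n, hn⟩ := h
  exact ⟨n + 1, by rw [Function.iterate_succ_apply]; exact hn⟩

lemma lt_ceil_of_nonint {d : ℝ} (h : ¬ ∃ k : ℤ, d = (k : ℝ)) : d < (⌈d⌉ : ℝ) :=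
  lt_of_le_of_ne (Int.le_ceil d) (fun he => h ⟨⌈d⌉, he⟩)

/-- The endgame: from the canonical crossing point `D - ⌈D⌉` (when negative), with bit 0,
we reach `0` in at most two steps. -/
lemma endgame (D : ℝ) (hD : 1 < D) (hneg : D - (⌈D⌉ : ℤ) < 0) :
    R0 D (D - (⌈D⌉ : ℤ), false) := by
  set c : ℤ := ⌈D⌉ with hc
  have hx1 : (-1 : ℝ) < D - c := by
    have := Int.ceil_lt_add_one D
    rw [← hc] at this
    linarith
  have hDc : D < (c : ℝ) := by linarith
  have hDc1 : (c : ℝ) - 1 < D := by linarith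
  by_cases h : ∃ m : ℤ, D + (D - (c : ℝ)) = (m : ℝ)
  · -- integer observation: then `D - c = -1/2`
    obtain ⟨m, hm⟩ := h
    have h1 : (m : ℝ) < c := by linarith
    have h2 : (c : ℝ) - 2 < m := by linarith
    have h1' : m < c := by exact_mod_cast h1
    have h2' : c - 2 < m := by exact_mod_cast h2
    have hmc : m = c - 1 := by omega
    have hval : D - (c : ℝ) = -(1/2 : ℝ) := by
      rw [hmc] at hm; push_cast at hm; linarith
    apply R0_step
    rw [step_L_int D _ false (by linarith) ⟨m, hm⟩]
    exact R0_zero (by show D - (c : ℝ) + 1/2 = 0; linarith [hval])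
  · -- non-integer observation: test jump
    apply R0_step
    rw [step_Lf_nonint D _ (by linarith) h]
    have hd1 : D + (D - (c : ℝ)) < c := by linarith
    have hd2 : (c : ℝ) - 2 < D + (D - (c : ℝ)) := by linarith
    have hcu : ⌈D + (D - (c : ℝ))⌉ ≤ c := Int.ceil_le.mpr (le_of_lt hd1)
    have hcl : c - 2 < ⌈D + (D - (c : ℝ))⌉ := by
      have := Int.le_ceil (D + (D - (c : ℝ)))
      have : (c : ℝ) - 2 < (⌈D + (D - (c : ℝ))⌉ : ℝ) := lt_of_lt_of_le hd2 this
      exact_mod_cast this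
    have hcases : ⌈D + (D - (c : ℝ))⌉ = c - 1 ∨ ⌈D + (D - (c : ℝ))⌉ = c := by omega
    rcases hcases with hcc | hcc
    · -- lands exactly on 0
      apply R0_zero
      simp only
      rw [hcc]; push_cast; ring
    · -- lands at 1/2 with bit 1, then finish
      have hval : D - (c : ℝ) + ((⌈D + (D - (c : ℝ))⌉ : ℝ) + 1 - (D + (D - (c : ℝ)))) / 2
          = 1/2 := by rw [hcc]; push_cast; ring
      rw [hval]
      apply R0_step
      rw [step_Rt D _ (by norm_num)]
      exact R0_zero (by norm_num)

/-- Marching down the grid `D - ℤ` with bit 0. -/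
lemma march (D : ℝ) (hD : 1 < D) :
    ∀ k : ℕ, ∀ y : ℝ, 0 < y → y ≤ (k : ℝ) → (∃ m : ℤ, D - y = (m : ℝ)) → R0 D (y, false) := by
  intro k
  induction k with
  | zero => intro y hy hyk _; exfalso; simp at hyk; linarith
  | succ k ih =>
    intro y hy hyk hm
    obtain ⟨m, hm⟩ := hm
    apply R0_step
    rw [step_Rf_int D y hy ⟨m, hm⟩]
    rcases lt_trichotomy (y - 1) 0 with hneg | hzero | hpos
    · -- crossed: y - 1 = D - ⌈D⌉
      have hkey : ⌈D⌉ = m + 1 := by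
        rw [Int.ceil_eq_iff]
        constructor
        · push_cast; linarith
        · push_cast; linarith
      have : y - 1 = D - ((⌈D⌉ : ℤ) : ℝ) := by rw [hkey]; push_cast; linarith
      rw [this]
      exact endgame D hD (by rw [← this]; exact hneg)
    · exact R0_zero (by simpa using hzero)
    · apply ih (y - 1) hpos (by push_cast at hyk ⊢; linarith)
      exact ⟨m + 1, by push_cast; linarith⟩

/-- From any positive position with bit 0 we reach 0. -/
lemma funnel (D : ℝ) (hD : 1 < D) (y : ℝ) (hy : 0 < y) (hyD : y ≤ D) : R0 D (y, false) := by
  by_cases h : ∃ m : ℤ, D - y = (m : ℝ)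
  · refine march D hD (⌈y⌉).toNat y hy ?_ h
    have hcast : (((⌈y⌉).toNat : ℕ) : ℝ) = ((⌈y⌉ : ℤ) : ℝ) := by
      exact_mod_cast Int.toNat_of_nonneg (Int.ceil_nonneg hy.le)
    rw [hcast]; exact Int.le_ceil y
  · apply R0_step
    rw [step_Rf_nonint D y hy h]
    set d : ℝ := D - y with hd
    have hd0 : 0 < d := lt_of_le_of_ne (by linarith) (fun he => h ⟨0, by simp [← he]⟩)
    have hdD : d < D := by linarith
    rcases lt_trichotomy (D - ((⌈d⌉ : ℤ) : ℝ)) 0 with hneg | hzero | hpos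
    · have hle : ⌈d⌉ ≤ ⌈D⌉ := Int.ceil_le_ceil (by linarith)
      have hge : ⌈D⌉ ≤ ⌈d⌉ := Int.ceil_le.mpr (by linarith)
      have : ⌈d⌉ = ⌈D⌉ := le_antisymm hle hge
      rw [this] at hneg ⊢
      exact endgame D hD hneg
    · exact R0_zero (by simpa using hzero)
    · apply march D hD (⌈D - ((⌈d⌉ : ℤ) : ℝ)⌉).toNat _ hpos
      · have hcast : (((⌈D - ((⌈d⌉ : ℤ) : ℝ)⌉).toNat : ℕ) : ℝ)
            = ((⌈D - ((⌈d⌉ : ℤ) : ℝ)⌉ : ℤ) : ℝ) := by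
          exact_mod_cast Int.toNat_of_nonneg (Int.ceil_nonneg hpos.le)
        rw [hcast]; exact Int.le_ceil _
      · exact ⟨⌈d⌉, by ring⟩

/-- From any positive position with bit 1 we reach 0. -/
lemma rtrue (D : ℝ) (hD : 1 < D) :
    ∀ k : ℕ, ∀ y : ℝ, 0 < y → y ≤ D → 2 * y ≤ (k : ℝ) → R0 D (y, true) := by
  intro k
  induction k with
  | zero => intro y hy _ hyk; exfalso; simp at hyk; linarith
  | succ k ih =>
    intro y hy hyD hyk
    apply R0_step
    rw [step_Rt D y hy]
    rcases lt_trichotomy (y - 1/2) 0 with hneg | hzero | hpos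
    · -- crossed to (-1/2, 0), bit 1
      by_cases h : ∃ m : ℤ, D + (y - 1/2) = (m : ℝ)
      · apply R0_step
        rw [step_L_int D _ true hneg h]
        have : y - 1/2 + 1/2 = y := by ring
        rw [this]
        exact funnel D hD y hy hyD
      · apply R0_step
        rw [step_Lt_nonint D _ hneg h]
        have heq : y - 1/2 + 1 = y + 1/2 := by ring
        rw [heq]
        exact funnel D hD (y + 1/2) (by linarith) (by linarith)
    · exact R0_zero (by simpa using hzero)
    · exact ih (y - 1/2) hpos (by linarith) (by push_cast at hyk ⊢; linarith)

/-- From any negative position with any bit we reach 0. -/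
lemma lefty (D : ℝ) (hD : 1 < D) :
    ∀ k : ℕ, ∀ x : ℝ, ∀ b : Bool, x < 0 → -2 * x ≤ (k : ℝ) → R0 D (x, b) := by
  intro k
  induction k with
  | zero => intro x b hx hxk; exfalso; simp at hxk; linarith
  | succ k ih =>
    intro x b hx hxk
    have key : ∀ x' : ℝ, ∀ b' : Bool, stepB MG D (x, b) = (x', b') →
        x + 1/2 ≤ x' → x' < 1 → R0 D (x, b) := by
      intro x' b' hstep hlo hhi
      apply R0_step
      rw [hstep]
      rcases lt_trichotomy x' 0 with hneg | hzero | hpos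
      · exact ih x' b' hneg (by push_cast at hxk ⊢; linarith)
      · exact R0_zero (by simpa using hzero)
      · cases b' with
        | false => exact funnel D hD x' hpos (by linarith)
        | true => exact rtrue D hD 2 x' hpos (by linarith) (by norm_num; linarith)
    by_cases h : ∃ m : ℤ, D + x = (m : ℝ)
    · exact key (x + 1/2) false (step_L_int D x b hx h) (le_refl _) (by linarith)
    · cases b with
      | false =>
        have hceil : D + x < (⌈D + x⌉ : ℝ) := lt_ceil_of_nonint h
        have hceil2 : (⌈D + x⌉ : ℝ) < D + x + 1 := by
          have := Int.ceil_lt_add_one (D + x); exact_mod_cast this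
        exact key _ true (step_Lf_nonint D x hx h) (by linarith) (by linarith)
      | true =>
        exact key (x + 1) false (step_Lt_nonint D x hx h) (by linarith) (by linarith)

theorem single_bit_memory_solvable :
    ∃ M : (Side × ℝ) × Bool → ℝ × Bool, ∀ D : ℝ, 1 < D →
      (∀ x : ℝ, ∀ b : Bool, x ∈ Set.Icc (-D) D → (stepB M D (x, b)).1 ∈ Set.Icc (-D) D) ∧
      (∀ x₀ ∈ Set.Icc (-D) D, ∀ b₀ : Bool, ∃ n : ℕ, ((stepB M D)^[n] (x₀, b₀)).1 = 0) := by
  refine ⟨MG, fun D hD => ⟨?_, ?_⟩⟩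
  · -- invariance of [-D, D]
    intro x b hx
    obtain ⟨hx1, hx2⟩ := hx
    rcases lt_trichotomy x 0 with hneg | hzero | hpos
    · by_cases h : ∃ m : ℤ, D + x = (m : ℝ)
      · rw [step_L_int D x b hneg h]
        constructor <;> simp <;> linarith
      · cases b with
        | false =>
          have hc1 : D + x < (⌈D + x⌉ : ℝ) := lt_ceil_of_nonint h
          have hc2 : (⌈D + x⌉ : ℝ) < D + x + 1 := by
            have := Int.ceil_lt_add_one (D + x); exact_mod_cast this
          rw [step_Lf_nonint D x hneg h]
          constructor <;> simp <;> linarith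
        | true =>
          rw [step_Lt_nonint D x hneg h]
          constructor <;> simp <;> linarith
    · subst hzero
      have : stepB MG D (0, b) = (0, b) := by
        simp [stepB]
      rw [this]
      constructor <;> simp <;> linarith
    · by_cases hb : b = true
      · subst hb
        rw [step_Rt D x hpos]
        constructor <;> simp <;> linarith
      · have hb' : b = false := by simpa using hb
        subst hb'
        by_cases h : ∃ m : ℤ, D - x = (m : ℝ)
        · rw [step_Rf_int D x hpos h]
          constructor <;> simp <;> linarith
        · rw [step_Rf_nonint D x hpos h]
          have hd0 : (0 : ℝ) ≤ D - x := by linarith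
          have hc0 : (0 : ℤ) ≤ ⌈D - x⌉ := Int.ceil_nonneg hd0
          have hc0' : (0 : ℝ) ≤ (⌈D - x⌉ : ℝ) := by exact_mod_cast hc0
          have hc2 : (⌈D - x⌉ : ℝ) < (D - x) + 1 := by
            have := Int.ceil_lt_add_one (D - x); exact_mod_cast this
          constructor <;> simp <;> linarith
  · -- termination
    intro x₀ hx₀ b₀
    obtain ⟨hx1, hx2⟩ := hx₀
    rcases lt_trichotomy x₀ 0 with hneg | hzero | hpos
    · have hk : -2 * x₀ ≤ ((⌈2 * D⌉.toNat : ℕ) : ℝ) := by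
        have h2 : (2:ℝ) * D ≤ ((⌈2 * D⌉ : ℤ) : ℝ) := Int.le_ceil _
        have h3 : ((⌈2 * D⌉ : ℤ) : ℝ) ≤ ((⌈2 * D⌉.toNat : ℕ) : ℝ) := by
          exact_mod_cast Int.self_le_toNat _
        linarith
      exact lefty D hD _ x₀ b₀ hneg hk
    · exact ⟨0, by simpa using hzero⟩
    · cases b₀ with
      | false => exact funnel D hD x₀ hpos hx2
      | true =>
        have hk : 2 * x₀ ≤ ((⌈2 * D⌉.toNat : ℕ) : ℝ) := by
          have h2 : (2:ℝ) * D ≤ ((⌈2 * D⌉ : ℤ) : ℝ) := Int.le_ceil _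
          have h3 : ((⌈2 * D⌉ : ℤ) : ℝ) ≤ ((⌈2 * D⌉.toNat : ℕ) : ℝ) := by
            exact_mod_cast Int.self_le_toNat _
          linarith
        exact rtrue D hD _ x₀ hpos hx2 hk
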